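/- arXiv:1809.02835 — 6 statements merged into one kernel-verified Lean document; each statement's English description precedes it below -/
import Mathlib

section
/- If H is a bipartite half-cover of K_n with no connected matching of size larger than f(n), then the 2-coloring of the edges of K_n obtained by coloring {i,j} (i<j) red if (u_i,v_j) ∈ E(H) and blue otherwise, has no monochromatic clique of size f(n)+2; i.e., any monochromatic clique of size r in this coloring yields a connected matching of size r−1 in H. -/
/-!
Walking through a monochromatic clique `x₀ < x₁ < ⋯ < x_{r-1}` in increasing order (red) or
decreasing order (blue), the edges `(xₖ, xₖ₊₁)` of `H` form a matching of size `r - 1`. It is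
connected because for `k < l` the edge `(xₖ, x_{l+1})` is present as well. So a clique of size
`f(n) + 2` would give a connected matching of size `f(n) + 1`.
-/

def BipMatching {A B : Type*} (E : A → B → Prop) (M : Finset (A × B)) : Prop :=
  (∀ e ∈ M, E e.1 e.2) ∧ ∀ e ∈ M, ∀ f ∈ M, e ≠ f → e.1 ≠ f.1 ∧ e.2 ≠ f.2

/-- A connected matching: a matching in which every two distinct edges are
joined by an edge of the (bipartite) graph. -/
def BipConnMatching {A B : Type*} (E : A → B → Prop) (M : Finset (A × B)) : Prop :=
  BipMatching E M ∧ ∀ e ∈ M, ∀ f ∈ M, e ≠ f → (E e.1 f.2 ∨ E f.1 e.2)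

section PathMatching

variable {α : Type*} [DecidableEq α] {m : ℕ} {g : Fin (m + 1) → α}

def pathMatching (g : Fin (m + 1) → α) : Finset (α × α) :=
  Finset.univ.image fun k : Fin m => (g k.castSucc, g k.succ)

theorem card_pathMatching (hg : g.Injective) : (pathMatching g).card = m := by
  rw [pathMatching, Finset.card_image_of_injective, Finset.card_univ, Fintype.card_fin]
  intro k l hkl
  exact Fin.castSucc_injective m (hg (Prod.ext_iff.mp hkl).1)

theorem bipConnMatching_pathMatching (E : α → α → Prop) (hg : g.Injective)
    (hE : ∀ i j, i < j → E (g i) (g j)) : BipConnMatching E (pathMatching g) := by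
  simp only [BipConnMatching, BipMatching, pathMatching, Finset.mem_image, Finset.mem_univ,
    true_and, forall_exists_index, forall_apply_eq_imp_iff]
  refine ⟨⟨fun k => hE _ _ Fin.castSucc_lt_succ, fun k l hkl => ?_⟩, fun k l hkl => ?_⟩
  · have hkl : k ≠ l := fun h => hkl (h ▸ rfl)
    exact ⟨hg.ne ((Fin.castSucc_injective m).ne hkl), hg.ne ((Fin.succ_injective m).ne hkl)⟩
  · rcases le_total k l with h | h
    · exact .inl (hE _ _ (Fin.castSucc_lt_succ_iff.mpr h))
    · exact .inr (hE _ _ (Fin.castSucc_lt_succ_iff.mpr h))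

end PathMatching

theorem exists_bipConnMatching_card_add_one_of_forall_lt {α : Type*} [LinearOrder α]
    (E : α → α → Prop) {S : Finset α} (hS : S.Nonempty)
    (hE : (∀ i ∈ S, ∀ j ∈ S, i < j → E i j) ∨ ∀ i ∈ S, ∀ j ∈ S, i < j → E j i) :
    ∃ M : Finset (α × α), BipConnMatching E M ∧ M.card + 1 = S.card := by
  obtain ⟨m, hm⟩ := Nat.exists_eq_add_one_of_ne_zero hS.card_pos.ne'
  let g := S.orderEmbOfFin hm
  have hmem (k : Fin (m + 1)) : g k ∈ S := S.orderEmbOfFin_mem hm k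
  rcases hE with hred | hblue
  · exact ⟨pathMatching g, bipConnMatching_pathMatching E g.injective
      (fun i j hij => hred _ (hmem i) _ (hmem j) (g.strictMono hij)),
      by rw [card_pathMatching g.injective, hm]⟩
  · have hg : (g ∘ Fin.rev).Injective := g.injective.comp Fin.rev_injective
    exact ⟨pathMatching (g ∘ Fin.rev), bipConnMatching_pathMatching E hg
      (fun i j hij => hblue _ (hmem _) _ (hmem _) (g.strictMono (Fin.rev_lt_rev.mpr hij))),
      by rw [card_pathMatching hg, hm]⟩

theorem stmt1_general {n : ℕ} (f : ℕ) (E : Fin n → Fin n → Prop)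
    (hcover : ∀ i j : Fin n, i ≠ j → E i j ∨ E j i)
    (hsmall : ∀ M : Finset (Fin n × Fin n), BipConnMatching E M → M.card ≤ f) :
    ∀ S : Finset (Fin n),
      ((∀ i ∈ S, ∀ j ∈ S, i < j → E i j) ∨ (∀ i ∈ S, ∀ j ∈ S, i < j → ¬ E i j)) →
      (S.Nonempty → ∃ M : Finset (Fin n × Fin n), BipConnMatching E M ∧ M.card + 1 = S.card) ∧
      S.card ≤ f + 1 := by
  intro S hcolor
  have hchain : (∀ i ∈ S, ∀ j ∈ S, i < j → E i j) ∨ ∀ i ∈ S, ∀ j ∈ S, i < j → E j i :=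
    hcolor.imp_right fun hblue i hi j hj hij =>
      (hcover i j hij.ne).resolve_left (hblue i hi j hj hij)
  have hmatch (hS : S.Nonempty) := exists_bipConnMatching_card_add_one_of_forall_lt E hS hchain
  refine ⟨hmatch, ?_⟩
  rcases S.eq_empty_or_nonempty with rfl | hS
  · simp
  · obtain ⟨M, hM, hcard⟩ := hmatch hS
    have := hsmall M hM
    omega

theorem stmt1 {n : ℕ} (f : ℕ) (E : Fin n → Fin n → Prop)
    (hcover : ∀ i j : Fin n, i ≠ j → E i j ∨ E j i)
    (hdiag : ∀ i : Fin n, ¬ E i i)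
    (hsmall : ∀ M : Finset (Fin n × Fin n), BipConnMatching E M → M.card ≤ f) :
    ∀ S : Finset (Fin n),
      ((∀ i ∈ S, ∀ j ∈ S, i < j → E i j) ∨ (∀ i ∈ S, ∀ j ∈ S, i < j → ¬ E i j)) →
      (S.Nonempty → ∃ M : Finset (Fin n × Fin n), BipConnMatching E M ∧ M.card + 1 = S.card) ∧
      S.card ≤ f + 1 :=
  stmt1_general f E hcover hsmall
end

section
/- Let G = ([n], E_G) be a graph and H = (A = {u_1,...,u_n}, B = {v_1,...,v_n}, E_H) a balanced bipartite graph. Define the bipartite graph G ⊟ H on vertex sets A, B with edges: (u_i,v_j) for i ≠ j whenever (u_i,v_j) ∈ E_H and {i,j} ∈ E_G, together with all edges (u_i,v_i) for i ∈ [n]. Then the maximum connected matching size satisfies ν_c(G ⊟ H) ≤ ω(G) + 3·ν_c(H), where ω(G) is the clique number of G. -/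
/-- The edge relation of `G ⊟ H`: all diagonal edges `(u_i, v_i)`, together with
`(u_i, v_j)` for `i ≠ j` whenever `(u_i,v_j) ∈ E_H` and `{i,j} ∈ E_G`. -/
def boxProd {n : ℕ} (G : SimpleGraph (Fin n)) (EH : Fin n → Fin n → Prop) :
    Fin n → Fin n → Prop :=
  fun i j => i = j ∨ (EH i j ∧ G.Adj i j)


/-!
The diagonal edges `(u_i, v_i)` of a connected matching of `G ⊟ H` are pairwise joined only
through edges `(u_i, v_j)` with `i ≠ j`, which are edges of `G`; so their indices form a clique
of `G`. Among the off-diagonal edges, call two of them linked if an edge joining them is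
diagonal. Each edge is linked to at most two others, so a greedy choice keeps a third of them
pairwise unlinked; these are then joined by edges of `H`, and form a connected matching of `H`.
-/

open Finset

namespace SimpleGraph

variable {α : Type*} [DecidableEq α] (G : SimpleGraph α) [DecidableRel G.Adj]

theorem exists_isIndepSet_subset_card_le_mul (d : ℕ) (s : Finset α)
    (hdeg : ∀ a ∈ s, #(s.filter (G.Adj a)) ≤ d) :
    ∃ t ⊆ s, G.IsIndepSet (t : Set α) ∧ #s ≤ (d + 1) * #t := by
  induction s using Finset.strongInduction with
  | H s ih =>
  rcases s.eq_empty_or_nonempty with rfl | ⟨a, ha⟩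
  · exact ⟨∅, empty_subset _, by simp, by simp⟩
  set s' := s \ insert a (s.filter (G.Adj a))
  have hs's : s' ⊂ s := sdiff_ssubset (insert_subset ha (filter_subset _ _)) (insert_nonempty _ _)
  have hdeg' : ∀ b ∈ s', #(s'.filter (G.Adj b)) ≤ d := fun b hb =>
    (card_le_card (filter_subset_filter _ sdiff_subset)).trans (hdeg b (sdiff_subset hb))
  obtain ⟨t, hts', ht, hcard⟩ := ih s' hs's hdeg'
  have hat : a ∉ t := fun h => (mem_sdiff.1 (hts' h)).2 (mem_insert_self _ _)
  have hna : ∀ b ∈ t, ¬G.Adj a b := fun b hb hab =>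
    (mem_sdiff.1 (hts' hb)).2 (mem_insert_of_mem (mem_filter.2 ⟨sdiff_subset (hts' hb), hab⟩))
  refine ⟨insert a t, insert_subset ha (hts'.trans sdiff_subset), ?_, ?_⟩
  · rw [coe_insert, isIndepSet_iff, Set.pairwise_insert_of_notMem (by simpa using hat)]
    exact ⟨ht, fun b hb => ⟨hna b hb, fun hba => hna b hb hba.symm⟩⟩
  · have hs : #s ≤ #s' + (d + 1) :=
      card_le_card_sdiff_add_card.trans (by grw [card_insert_le, hdeg a ha])
    rw [card_insert_of_notMem hat]
    nlinarith

end SimpleGraph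

section BipMatching

variable {A B : Type*} {E : A → B → Prop} {M N : Finset (A × B)}

theorem BipMatching.mono (hM : BipMatching E M) (hNM : N ⊆ M) : BipMatching E N :=
  ⟨fun e he => hM.1 e (hNM he), fun e he f hf => hM.2 e (hNM he) f (hNM hf)⟩

theorem BipMatching.injOn_fst (hM : BipMatching E M) : Set.InjOn Prod.fst (M : Set (A × B)) :=
  fun e he f hf hef => by_contra fun hne => (hM.2 e he f hf hne).1 hef

theorem BipMatching.card_filter_fst_eq_le_one [DecidableEq A] (hM : BipMatching E M) (a : A) :
    #(M.filter fun e => e.1 = a) ≤ 1 := by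
  refine card_le_one.2 fun e he f hf => by_contra fun hne => ?_
  rw [mem_filter] at he hf
  exact (hM.2 e he.1 f hf.1 hne).1 (he.2.trans hf.2.symm)

theorem BipMatching.card_filter_snd_eq_le_one [DecidableEq B] (hM : BipMatching E M) (b : B) :
    #(M.filter fun e => e.2 = b) ≤ 1 := by
  refine card_le_one.2 fun e he f hf => by_contra fun hne => ?_
  rw [mem_filter] at he hf
  exact (hM.2 e he.1 f hf.1 hne).2 (he.2.trans hf.2.symm)

end BipMatching

/-- In `G ⊟ H`, two edges adjacent here may be joined only through a diagonal edge, which need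
not be an edge of `H`. -/
def diagLinkGraph (A : Type*) : SimpleGraph (A × A) :=
  SimpleGraph.fromRel fun e f => e.1 = f.2

instance {A : Type*} [DecidableEq A] : DecidableRel (diagLinkGraph A).Adj :=
  inferInstanceAs (DecidableRel (SimpleGraph.fromRel _).Adj)

theorem diagLinkGraph_adj {A : Type*} {e f : A × A} :
    (diagLinkGraph A).Adj e f ↔ e ≠ f ∧ (e.1 = f.2 ∨ f.1 = e.2) :=
  SimpleGraph.fromRel_adj _ e f

theorem BipMatching.card_filter_diagLinkGraph_adj_le_two {A : Type*} [DecidableEq A]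
    {E : A → A → Prop} {M : Finset (A × A)} (hM : BipMatching E M) (e : A × A) :
    #(M.filter ((diagLinkGraph A).Adj e)) ≤ 2 := by
  have hsub : M.filter ((diagLinkGraph A).Adj e) ⊆
      M.filter (fun f => f.2 = e.1) ∪ M.filter (fun f => f.1 = e.2) := by
    intro f hf
    simp only [mem_filter, mem_union, diagLinkGraph_adj] at hf ⊢
    grind
  calc _ ≤ _ := card_le_card hsub
    _ ≤ 1 + 1 := (card_union_le _ _).trans
        (add_le_add (hM.card_filter_snd_eq_le_one _) (hM.card_filter_fst_eq_le_one _))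

section boxProd

variable {n : ℕ} {G : SimpleGraph (Fin n)} {EH : Fin n → Fin n → Prop}
  {M : Finset (Fin n × Fin n)}

theorem BipConnMatching.isClique_image_fst_diag (hM : BipConnMatching (boxProd G EH) M) :
    G.IsClique ((M.filter fun e => e.1 = e.2).image Prod.fst : Set (Fin n)) := by
  intro i hi j hj hij
  simp only [coe_image, coe_filter, Set.mem_image, Set.mem_ofPred_eq] at hi hj
  obtain ⟨e, ⟨he, he'⟩, rfl⟩ := hi
  obtain ⟨f, ⟨hf, hf'⟩, rfl⟩ := hj
  have hne : e ≠ f := fun h => hij (congrArg Prod.fst h)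
  rcases hM.2 e he f hf hne with (h | h) | (h | h)
  · exact absurd (h.trans hf'.symm) hij
  · exact hf' ▸ h.2
  · exact absurd (h.trans he'.symm).symm hij
  · exact (he' ▸ h.2).symm

theorem BipConnMatching.of_boxProd (hM : BipConnMatching (boxProd G EH) M)
    {S : Finset (Fin n × Fin n)} (hSM : S ⊆ M.filter fun e => e.1 ≠ e.2)
    (hS : (diagLinkGraph (Fin n)).IsIndepSet (S : Set (Fin n × Fin n))) :
    BipConnMatching EH S := by
  have hSM' : S ⊆ M := hSM.trans (filter_subset _ _)
  refine ⟨⟨fun e he => ?_, (hM.1.mono hSM').2⟩, fun e he f hf hne => ?_⟩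
  · exact (hM.1.1 e (hSM' he)).resolve_left (mem_filter.1 (hSM he)).2 |>.1
  · obtain ⟨hef, hfe⟩ : e.1 ≠ f.2 ∧ f.1 ≠ e.2 :=
      not_or.1 fun h => hS he hf hne (diagLinkGraph_adj.2 ⟨hne, h⟩)
    rcases hM.2 e (hSM' he) f (hSM' hf) hne with (h | h) | (h | h)
    · exact absurd h hef
    · exact Or.inl h.1
    · exact absurd h hfe
    · exact Or.inr h.1

end boxProd

/-- ν_c(G ⊟ H) ≤ ω(G) + 3 ν_c(H), phrased via upper bounds `K₁` on clique sizes of `G`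
and `K₂` on connected matching sizes of `H`. -/
theorem stmt2 {n : ℕ} (G : SimpleGraph (Fin n)) (EH : Fin n → Fin n → Prop)
    (K₁ K₂ : ℕ)
    (hω : ∀ C : Finset (Fin n), G.IsClique (C : Set (Fin n)) → C.card ≤ K₁)
    (hν : ∀ N : Finset (Fin n × Fin n), BipConnMatching EH N → N.card ≤ K₂) :
    ∀ M : Finset (Fin n × Fin n), BipConnMatching (boxProd G EH) M →
      M.card ≤ K₁ + 3 * K₂ := by
  intro M hM
  set D := M.filter fun e => e.1 = e.2
  set O := M.filter fun e => ¬e.1 = e.2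
  have hD : #D ≤ K₁ := by
    rw [← card_image_of_injOn (hM.1.injOn_fst.mono (coe_subset.2 (filter_subset _ _)))]
    exact hω _ hM.isClique_image_fst_diag
  obtain ⟨S, hSO, hS, hOS⟩ := (diagLinkGraph (Fin n)).exists_isIndepSet_subset_card_le_mul 2 O
    fun e _ => (hM.1.mono (filter_subset _ M)).card_filter_diagLinkGraph_adj_le_two e
  have hO : #O ≤ 3 * K₂ := hOS.trans (Nat.mul_le_mul_left 3 (hν S (hM.of_boxProd hSO hS)))
  have hDO : #D + #O = #M := card_filter_add_card_filter_not _
  omega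
end

section
/- Let G = ([n], E_G) be a graph and H a bipartite half-cover of K_n. Define G ⊟ H as the bipartite graph on A = {u_1,...,u_n}, B = {v_1,...,v_n} with edges (u_i,v_j) for i ≠ j whenever (u_i,v_j) ∈ E_H and {i,j} ∈ E_G, together with all diagonal edges (u_i,v_i). Then ν_c(G ⊟ H) ≥ ω(G). -/
section Diag

variable {α : Type*} {E : α → α → Prop} {s : Finset α}

theorem bipMatching_diag (hrefl : ∀ i ∈ s, E i i) : BipMatching E s.diag := by
  refine ⟨fun e he => ?_, fun e he f hf hne => ?_⟩
  · obtain ⟨hi, heq⟩ := Finset.mem_diag.mp he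
    exact heq ▸ hrefl e.1 hi
  · obtain ⟨-, he⟩ := Finset.mem_diag.mp he
    obtain ⟨-, hf⟩ := Finset.mem_diag.mp hf
    have h1 : e.1 ≠ f.1 := fun h => hne (Prod.ext h (he ▸ hf ▸ h))
    exact ⟨h1, he ▸ hf ▸ h1⟩

theorem bipConnMatching_diag (hrefl : ∀ i ∈ s, E i i)
    (htotal : ∀ i ∈ s, ∀ j ∈ s, i ≠ j → E i j ∨ E j i) : BipConnMatching E s.diag := by
  refine ⟨bipMatching_diag hrefl, fun e he f hf hne => ?_⟩
  obtain ⟨hi, he⟩ := Finset.mem_diag.mp he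
  obtain ⟨hj, hf⟩ := Finset.mem_diag.mp hf
  rw [← he, ← hf]
  exact htotal e.1 hi f.1 hj fun h => hne (Prod.ext h (he ▸ hf ▸ h))

end Diag

theorem boxProd_total_of_isClique {n : ℕ} {G : SimpleGraph (Fin n)} {EH : Fin n → Fin n → Prop}
    (hcover : ∀ i j : Fin n, i ≠ j → EH i j ∨ EH j i) {C : Finset (Fin n)}
    (hC : G.IsClique (C : Set (Fin n))) {i j : Fin n} (hi : i ∈ C) (hj : j ∈ C) (hij : i ≠ j) :
    boxProd G EH i j ∨ boxProd G EH j i := by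
  have hadj : G.Adj i j := hC hi hj hij
  rcases hcover i j hij with h | h
  · exact Or.inl (Or.inr ⟨h, hadj⟩)
  · exact Or.inr (Or.inr ⟨h, hadj.symm⟩)

theorem stmt3_general {n : ℕ} (G : SimpleGraph (Fin n)) (EH : Fin n → Fin n → Prop)
    (hcover : ∀ i j : Fin n, i ≠ j → EH i j ∨ EH j i) :
    ∀ C : Finset (Fin n), G.IsClique (C : Set (Fin n)) →
      ∃ M : Finset (Fin n × Fin n), BipConnMatching (boxProd G EH) M ∧ C.card ≤ M.card := by
  intro C hC
  refine ⟨C.diag, bipConnMatching_diag (fun i _ => Or.inl rfl) ?_, (Finset.diag_card C).ge⟩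
  exact fun i hi j hj hij => boxProd_total_of_isClique hcover hC hi hj hij

/-- If `H` is a bipartite half-cover of `K_n`, then ν_c(G ⊟ H) ≥ ω(G): every clique of `G`
gives rise to a connected matching in `G ⊟ H` of at least the same size. -/
theorem stmt3 {n : ℕ} (G : SimpleGraph (Fin n)) (EH : Fin n → Fin n → Prop)
    (hcover : ∀ i j : Fin n, i ≠ j → EH i j ∨ EH j i)
    (hdiag : ∀ i : Fin n, ¬ EH i i) :
    ∀ C : Finset (Fin n), G.IsClique (C : Set (Fin n)) →
      ∃ M : Finset (Fin n × Fin n), BipConnMatching (boxProd G EH) M ∧ C.card ≤ M.card :=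
  stmt3_general G EH hcover
end

section
/- Let H = (U_H, E_H) be a graph on vertices u_1,...,u_n, and let G be the bipartite graph with parts {v_1,...,v_n} and {v'_1,...,v'_n}, edges (v_i,v'_i) for all i, and (v_i,v'_j) for all i < j with {u_i,u_j} ∈ E_H. Then the matching N = {(v_i,v'_i) : i ∈ [n]} is the unique perfect matching of G. -/
/-- The bipartite graph `G` built from a graph `H` on `u_1, …, u_n`: edges `(v_i, v'_i)`
for all `i`, and `(v_i, v'_j)` for `i < j` with `{u_i, u_j} ∈ E_H`. -/
def bipOfGraph {n : ℕ} (H : SimpleGraph (Fin n)) : Fin n → Fin n → Prop :=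
  fun i j => i = j ∨ (i < j ∧ H.Adj i j)

open Finset

namespace BipMatching

variable {A B : Type*} {E : A → B → Prop} {M : Finset (A × B)}

theorem injOn_fst_s5 (hM : BipMatching E M) : Set.InjOn Prod.fst (M : Set (A × B)) :=
  fun e he f hf h => by_contra fun hne => (hM.2 e he f hf hne).1 h

theorem injOn_snd (hM : BipMatching E M) : Set.InjOn Prod.snd (M : Set (A × B)) :=
  fun e he f hf h => by_contra fun hne => (hM.2 e he f hf hne).2 h

theorem image_fst_eq_univ [Fintype A] [DecidableEq A] (hM : BipMatching E M)
    (hcard : #M = Fintype.card A) : M.image Prod.fst = univ :=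
  eq_univ_of_card _ (by rw [card_image_of_injOn hM.injOn_fst_s5, hcard])

theorem image_snd_eq_univ [Fintype B] [DecidableEq B] (hM : BipMatching E M)
    (hcard : #M = Fintype.card B) : M.image Prod.snd = univ :=
  eq_univ_of_card _ (by rw [card_image_of_injOn hM.injOn_snd, hcard])

end BipMatching

theorem Finset.fst_eq_snd_of_image_fst_eq_image_snd {α : Type*} [DecidableEq α]
    {M : Finset (α × α)} (hfst : Set.InjOn Prod.fst (M : Set (α × α)))
    (hsnd : Set.InjOn Prod.snd (M : Set (α × α))) (himage : M.image Prod.fst = M.image Prod.snd)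
    {f : α → ℕ} (hf : Function.Injective f) (hle : ∀ e ∈ M, f e.1 ≤ f e.2) :
    ∀ e ∈ M, e.1 = e.2 := by
  have hsum : ∑ e ∈ M, f e.1 = ∑ e ∈ M, f e.2 := by
    rw [← sum_image (g := Prod.fst) hfst, ← sum_image (g := Prod.snd) hsnd, himage]
  exact fun e he => hf ((sum_eq_sum_iff_of_le hle).mp hsum e he)

theorem le_of_bipOfGraph {n : ℕ} {H : SimpleGraph (Fin n)} {i j : Fin n}
    (h : bipOfGraph H i j) : i ≤ j := by
  rcases h with rfl | ⟨hlt, -⟩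
  exacts [le_rfl, hlt.le]

/-- The diagonal `N = {(v_i, v'_i) : i ∈ [n]}` is the unique perfect matching of `G`. -/
theorem stmt5 {n : ℕ} (H : SimpleGraph (Fin n)) :
    ∀ M : Finset (Fin n × Fin n), BipMatching (bipOfGraph H) M → M.card = n →
      M = Finset.univ.image (fun i : Fin n => (i, i)) := by
  intro M hM hcard
  have hcard' : #M = Fintype.card (Fin n) := by rw [hcard, Fintype.card_fin]
  have hdiag : ∀ e ∈ M, e.1 = e.2 :=
    fst_eq_snd_of_image_fst_eq_image_snd hM.injOn_fst_s5 hM.injOn_snd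
      (by rw [hM.image_fst_eq_univ hcard', hM.image_snd_eq_univ hcard']) Fin.val_injective
      fun e he => le_of_bipOfGraph (hM.1 e he)
  refine eq_of_subset_of_card_le (fun e he => mem_image.mpr ⟨e.1, mem_univ _, ?_⟩) ?_
  · exact Prod.ext rfl (hdiag e he)
  · rw [card_image_of_injective _ fun i j h => congrArg Prod.fst h, card_univ, hcard']
end

section
/- Let H be a graph on vertices u_1,...,u_n and let G be the bipartite graph with parts {v_1,...,v_n}, {v'_1,...,v'_n}, edges (v_i,v'_i) for all i, and edges (v_i,v'_j) for i < j whenever {u_i,u_j} ∈ E_H. Then for any subset I ⊆ [n], the set I is an independent set in H if and only if {(v_i,v'_i) : i ∈ I} is an induced matching in G. -/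
/-- An induced matching: a matching no two of whose distinct edges are joined by an edge. -/
def BipInducedMatching {A B : Type*} (E : A → B → Prop) (M : Finset (A × B)) : Prop :=
  BipMatching E M ∧ ∀ e ∈ M, ∀ f ∈ M, e ≠ f → ¬ (E e.1 f.2 ∨ E f.1 e.2)

/-! A diagonal matching is induced exactly when no edge `(v_i, v'_j)` with `i ≠ j` joins two of
its vertices, and in `G` these are the edges of `H`, each oriented from the smaller index to the
larger one. -/

section Diagonal

variable {α : Type*} [DecidableEq α] (E : α → α → Prop) (I : Finset α)

theorem bipMatching_image_diag_iff :
    BipMatching E (I.image fun i => (i, i)) ↔ ∀ i ∈ I, E i i := by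
  simp only [BipMatching, Finset.forall_mem_image, ne_eq, Prod.mk.injEq, and_self, imp_self,
    implies_true, and_true]

theorem bipInducedMatching_image_diag_iff :
    BipInducedMatching E (I.image fun i => (i, i)) ↔
      (∀ i ∈ I, E i i) ∧ ∀ i ∈ I, ∀ j ∈ I, i ≠ j → ¬ E i j := by
  rw [BipInducedMatching, bipMatching_image_diag_iff]
  refine and_congr_right fun _ => ⟨fun h i hi j hj hij hE => ?_, fun h i hi j hj hij hE => ?_⟩
  · exact h _ (Finset.mem_image_of_mem _ hi) _ (Finset.mem_image_of_mem _ hj)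
      (by simpa using hij) (Or.inl hE)
  · simp only [Finset.mem_image] at hi hj
    obtain ⟨i, hi, rfl⟩ := hi
    obtain ⟨j, hj, rfl⟩ := hj
    have hij : i ≠ j := by simpa using hij
    exact hE.elim (h i hi j hj hij) (h j hj i hi hij.symm)

end Diagonal

theorem bipOfGraph_self {n : ℕ} (H : SimpleGraph (Fin n)) (i : Fin n) : bipOfGraph H i i :=
  Or.inl rfl

theorem bipOfGraph_of_ne_iff {n : ℕ} (H : SimpleGraph (Fin n)) {i j : Fin n} (hij : i ≠ j) :
    bipOfGraph H i j ↔ i < j ∧ H.Adj i j := by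
  simp only [bipOfGraph, hij, false_or]

theorem forall_not_bipOfGraph_iff {n : ℕ} (H : SimpleGraph (Fin n)) (I : Finset (Fin n)) :
    (∀ i ∈ I, ∀ j ∈ I, i ≠ j → ¬ bipOfGraph H i j) ↔ ∀ i ∈ I, ∀ j ∈ I, ¬ H.Adj i j := by
  refine ⟨fun h i hi j hj hadj => ?_, fun h i hi j hj hij hE => ?_⟩
  · rcases lt_or_gt_of_ne hadj.ne with hlt | hgt
    · exact h i hi j hj hadj.ne ((bipOfGraph_of_ne_iff H hadj.ne).2 ⟨hlt, hadj⟩)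
    · exact h j hj i hi hadj.ne.symm ((bipOfGraph_of_ne_iff H hadj.ne.symm).2 ⟨hgt, hadj.symm⟩)
  · exact h i hi j hj ((bipOfGraph_of_ne_iff H hij).1 hE).2

theorem stmt6 {n : ℕ} (H : SimpleGraph (Fin n)) :
    ∀ I : Finset (Fin n),
      ((∀ i ∈ I, ∀ j ∈ I, ¬ H.Adj i j) ↔
        BipInducedMatching (bipOfGraph H) (I.image (fun i => (i, i)))) := by
  intro I
  rw [bipInducedMatching_image_diag_iff, forall_not_bipOfGraph_iff]
  exact (and_iff_right fun i _ => bipOfGraph_self H i).symm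
end

section
/- Let C be a cycle of length 2k where k is odd. Then C contains a matching M of size k (every other edge of the cycle) such that the largest induced matching contained in M has size exactly (k−1)/2. Consequently, any graph containing such a cycle has α_k strictly less than 1/2. -/
/-!
Number the cycle `C_{2k}` as `0, 1, …, 2k-1` and take the `k` edges `{2i, 2i+1}`. Two of
them are joined by an edge of `C_{2k}` exactly when their indices are adjacent in `C_k`, so
induced submatchings are independent sets of `C_k`. An independent set `S` of `C_k` is
disjoint from its rotation `S + 1`, hence `2|S| ≤ k`, and the even vertices below `k - 1`
show that `⌊k/2⌋` is attained; for odd `k` this is `(k-1)/2 < k/2`. If `C_{2k}` sits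
injectively inside `G`, the image of the matching is a matching of size `k` in `G` whose
induced submatchings pull back to induced submatchings in `C_{2k}`, which bounds `α_k(G)`
by `((k-1)/2)/k`.
-/

/-- A matching in a graph `G`, given as a finite set of ordered pairs of adjacent
vertices, pairwise vertex-disjoint. -/
def GMatching {V : Type*} (G : SimpleGraph V) (M : Finset (V × V)) : Prop :=
  (∀ e ∈ M, G.Adj e.1 e.2) ∧
  ∀ e ∈ M, ∀ f ∈ M, e ≠ f →
    e.1 ≠ f.1 ∧ e.1 ≠ f.2 ∧ e.2 ≠ f.1 ∧ e.2 ≠ f.2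

/-- Two (disjoint) edges are joined by an edge of `G`. -/
def EdgeJoined {V : Type*} (G : SimpleGraph V) (e f : V × V) : Prop :=
  G.Adj e.1 f.1 ∨ G.Adj e.1 f.2 ∨ G.Adj e.2 f.1 ∨ G.Adj e.2 f.2

/-- A connected matching: every two distinct edges are joined by an edge of `G`. -/
def GConnMatching {V : Type*} (G : SimpleGraph V) (M : Finset (V × V)) : Prop :=
  GMatching G M ∧ ∀ e ∈ M, ∀ f ∈ M, e ≠ f → EdgeJoined G e f

/-- An induced matching: no two distinct edges are joined by an edge of `G`. -/
def GInducedMatching {V : Type*} (G : SimpleGraph V) (M : Finset (V × V)) : Prop :=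
  GMatching G M ∧ ∀ e ∈ M, ∀ f ∈ M, e ≠ f → ¬ EdgeJoined G e f

/-- The multitasking capacity `α_k(G)`: the maximal `α ∈ (0,1]` such that every matching
of size `k` contains an induced matching of size at least `α·k`; equal to `1` if `G`
has no matching of size `k`. -/
noncomputable def alphaMT {V : Type*} (G : SimpleGraph V) (k : ℕ) : ℝ :=
  letI := Classical.dec (∃ M : Finset (V × V), GMatching G M ∧ M.card = k)
  if ∃ M : Finset (V × V), GMatching G M ∧ M.card = k then
    sSup {a : ℝ | 0 < a ∧ a ≤ 1 ∧
      ∀ M : Finset (V × V), GMatching G M → M.card = k →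
        ∃ M' ⊆ M, GInducedMatching G M' ∧ a * (k : ℝ) ≤ (M'.card : ℝ)}
  else 1

open SimpleGraph

theorem Nat.mod_eq_or_eq_sub_of_lt_two_mul {a n : ℕ} (h : a < 2 * n) :
    (a < n ∧ a % n = a) ∨ (n ≤ a ∧ a % n = a - n) := by
  rcases lt_or_ge a n with ha | ha
  · exact .inl ⟨ha, Nat.mod_eq_of_lt ha⟩
  · exact .inr ⟨ha, by rw [Nat.mod_eq_sub_mod ha, Nat.mod_eq_of_lt (by omega)]⟩

theorem cycleGraph_adj_iff_val {n : ℕ} (hn : 2 ≤ n) {u v : Fin n} :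
    (cycleGraph n).Adj u v ↔ u.val + 1 = v.val ∨ v.val + 1 = u.val ∨
      (u.val + 1 = n ∧ v.val = 0) ∨ (v.val + 1 = n ∧ u.val = 0) := by
  rw [cycleGraph_adj', Fin.sub_def, Fin.sub_def]
  have hu := u.isLt
  have hv := v.isLt
  have := Nat.mod_eq_or_eq_sub_of_lt_two_mul (a := n - v + u) (n := n) (by omega)
  have := Nat.mod_eq_or_eq_sub_of_lt_two_mul (a := n - u + v) (n := n) (by omega)
  simp only
  omega

theorem cycleGraph_adj_finRotate {n : ℕ} (hn : 2 ≤ n) (u : Fin n) :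
    (cycleGraph n).Adj u (finRotate n u) := by
  obtain ⟨m, rfl⟩ : ∃ m, n = m + 1 := ⟨n - 1, by omega⟩
  have hu := u.isLt
  rw [cycleGraph_adj_iff_val hn, coe_finRotate]
  split_ifs with h <;> simp only [Fin.ext_iff, Fin.val_last] at h <;> omega

theorem two_mul_card_le_of_isIndepSet_cycleGraph {n : ℕ} (hn : n ≠ 1) {S : Finset (Fin n)}
    (hS : (cycleGraph n).IsIndepSet S) : 2 * S.card ≤ n := by
  rcases Nat.lt_or_ge n 2 with h | h
  · have := Finset.card_le_univ S
    rw [Fintype.card_fin] at this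
    omega
  have hdisj : Disjoint S (S.map (finRotate n).toEmbedding) := by
    refine Finset.disjoint_left.mpr fun u hu hu' => ?_
    obtain ⟨v, hv, rfl⟩ := Finset.mem_map.mp hu'
    have hadj := cycleGraph_adj_finRotate h v
    exact hS hv hu hadj.ne hadj
  calc 2 * S.card = (S ∪ S.map (finRotate n).toEmbedding).card := by
        rw [Finset.card_union_of_disjoint hdisj, Finset.card_map]; ring
    _ ≤ n := (Finset.card_le_univ _).trans_eq (Fintype.card_fin n)

theorem exists_isIndepSet_cycleGraph_card_eq (n : ℕ) :
    ∃ S : Finset (Fin n), (cycleGraph n).IsIndepSet S ∧ S.card = n / 2 := by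
  let double : Fin (n / 2) ↪ Fin n :=
    ⟨fun t => ⟨2 * t, by omega⟩, fun s t h => by simp only [Fin.mk.injEq] at h; omega⟩
  refine ⟨Finset.univ.map double, ?_, by simp⟩
  rintro _ hu _ hv huv
  obtain ⟨s, -, rfl⟩ := Finset.mem_map.mp hu
  obtain ⟨t, -, rfl⟩ := Finset.mem_map.mp hv
  have hs := s.isLt
  have ht := t.isLt
  have hs' : (double s).val = 2 * s := rfl
  have ht' : (double t).val = 2 * t := rfl
  rw [cycleGraph_adj_iff_val (by omega), hs', ht']
  omega

section Transfer

variable {V W : Type*} {H : SimpleGraph V} {G : SimpleGraph W}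

theorem GMatching.mono {M N : Finset (V × V)} (hM : GMatching H M) (hNM : N ⊆ M) :
    GMatching H N :=
  ⟨fun e he => hM.1 e (hNM he), fun e he f hf => hM.2 e (hNM he) f (hNM hf)⟩

theorem EdgeJoined.map (φ : H →g G) {e f : V × V} (h : EdgeJoined H e f) :
    EdgeJoined G (Prod.map φ φ e) (Prod.map φ φ f) := by
  rcases h with h | h | h | h
  · exact .inl (φ.map_adj h)
  · exact .inr (.inl (φ.map_adj h))
  · exact .inr (.inr (.inl (φ.map_adj h)))
  · exact .inr (.inr (.inr (φ.map_adj h)))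

variable [DecidableEq W]

theorem GMatching.image {φ : H →g G} (hφ : Function.Injective φ) {M : Finset (V × V)}
    (hM : GMatching H M) : GMatching G (M.image (Prod.map φ φ)) := by
  refine ⟨?_, ?_⟩
  · simp only [Finset.mem_image]
    rintro _ ⟨e, he, rfl⟩
    exact φ.map_adj (hM.1 e he)
  · simp only [Finset.mem_image]
    rintro _ ⟨e, he, rfl⟩ _ ⟨f, hf, rfl⟩ hef
    obtain ⟨h₁, h₂, h₃, h₄⟩ := hM.2 e he f hf (fun h => hef (h ▸ rfl))
    exact ⟨hφ.ne h₁, hφ.ne h₂, hφ.ne h₃, hφ.ne h₄⟩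

theorem GInducedMatching.of_image {φ : H →g G} (hφ : Function.Injective φ)
    {M : Finset (V × V)} (hM : GMatching H M)
    (hind : GInducedMatching G (M.image (Prod.map φ φ))) : GInducedMatching H M := by
  refine ⟨hM, fun e he f hf hef hjoin => ?_⟩
  exact hind.2 _ (Finset.mem_image_of_mem _ he) _ (Finset.mem_image_of_mem _ hf)
    ((hφ.prodMap hφ).ne hef) (hjoin.map φ)

theorem card_le_of_gInducedMatching_subset_image {φ : H →g G} (hφ : Function.Injective φ)
    {M : Finset (V × V)} (hM : GMatching H M) {b : ℕ}
    (hb : ∀ N ⊆ M, GInducedMatching H N → N.card ≤ b)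
    {M' : Finset (W × W)} (hM' : M' ⊆ M.image (Prod.map φ φ)) (hind : GInducedMatching G M') :
    M'.card ≤ b := by
  classical
  obtain ⟨N, hNM, rfl⟩ := Finset.subset_image_iff.mp hM'
  rw [Finset.card_image_of_injective _ (hφ.prodMap hφ)]
  exact hb N hNM (hind.of_image hφ (hM.mono hNM))

end Transfer

theorem alphaMT_le_div {V : Type*} {G : SimpleGraph V} {k : ℕ} (hk : 0 < k)
    {M : Finset (V × V)} (hM : GMatching G M) (hcard : M.card = k) {b : ℕ}
    (hb : ∀ M' ⊆ M, GInducedMatching G M' → M'.card ≤ b) :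
    alphaMT G k ≤ b / k := by
  rw [alphaMT, if_pos ⟨M, hM, hcard⟩]
  refine Real.sSup_le (fun a ⟨_, _, ha⟩ => ?_) (by positivity)
  obtain ⟨M', hM'M, hind, hle⟩ := ha M hM hcard
  rw [le_div_iff₀ (by positivity)]
  exact hle.trans (by exact_mod_cast hb M' hM'M hind)

section CycleAltMatching

variable {k : ℕ}

def cycleAltEdge (i : Fin k) : Fin (2 * k) × Fin (2 * k) :=
  (⟨2 * i, by omega⟩, ⟨2 * i + 1, by omega⟩)

theorem cycleAltEdge_injective : Function.Injective (cycleAltEdge (k := k)) := by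
  intro i j h
  simp only [cycleAltEdge, Prod.mk.injEq, Fin.mk.injEq] at h
  omega

theorem edgeJoined_cycleAltEdge_iff {i j : Fin k} (hij : i ≠ j) :
    EdgeJoined (cycleGraph (2 * k)) (cycleAltEdge i) (cycleAltEdge j) ↔
      (cycleGraph k).Adj i j := by
  have hi := i.isLt
  have hj := j.isLt
  have hij' : i.val ≠ j.val := Fin.val_ne_of_ne hij
  simp only [EdgeJoined, cycleAltEdge, cycleGraph_adj_iff_val (show 2 ≤ 2 * k by omega),
    cycleGraph_adj_iff_val (show 2 ≤ k by omega)]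
  omega

theorem gMatching_image_cycleAltEdge (S : Finset (Fin k)) :
    GMatching (cycleGraph (2 * k)) (S.image cycleAltEdge) := by
  refine ⟨?_, ?_⟩
  · simp only [Finset.mem_image]
    rintro _ ⟨i, -, rfl⟩
    have hi := i.isLt
    simp only [cycleAltEdge, cycleGraph_adj_iff_val (show 2 ≤ 2 * k by omega), true_or]
  · simp only [Finset.mem_image]
    rintro _ ⟨i, -, rfl⟩ _ ⟨j, -, rfl⟩ hij
    have hij' : i.val ≠ j.val := fun h => hij (congrArg _ (Fin.ext h))
    simp only [cycleAltEdge, ne_eq, Fin.mk.injEq]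
    omega

theorem gInducedMatching_image_cycleAltEdge_iff (S : Finset (Fin k)) :
    GInducedMatching (cycleGraph (2 * k)) (S.image cycleAltEdge) ↔
      (cycleGraph k).IsIndepSet S := by
  simp only [GInducedMatching, gMatching_image_cycleAltEdge, true_and, Finset.mem_image,
    SimpleGraph.isIndepSet_iff, Set.Pairwise, Finset.mem_coe]
  constructor
  · rintro h i hi j hj hij
    rw [← edgeJoined_cycleAltEdge_iff hij]
    exact h _ ⟨i, hi, rfl⟩ _ ⟨j, hj, rfl⟩ (cycleAltEdge_injective.ne hij)
  · rintro h _ ⟨i, hi, rfl⟩ _ ⟨j, hj, rfl⟩ hij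
    have hij' : i ≠ j := fun h => hij (h ▸ rfl)
    rw [edgeJoined_cycleAltEdge_iff hij']
    exact h hi hj hij'

variable (k) in
def cycleAltMatching : Finset (Fin (2 * k) × Fin (2 * k)) :=
  Finset.univ.image cycleAltEdge

theorem gMatching_cycleAltMatching : GMatching (cycleGraph (2 * k)) (cycleAltMatching k) :=
  gMatching_image_cycleAltEdge _

theorem card_cycleAltMatching : (cycleAltMatching k).card = k := by
  rw [cycleAltMatching, Finset.card_image_of_injective _ cycleAltEdge_injective,
    Finset.card_univ, Fintype.card_fin]

theorem card_le_of_gInducedMatching_subset_cycleAltMatching (hk : k ≠ 1)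
    {M' : Finset (Fin (2 * k) × Fin (2 * k))} (hM' : M' ⊆ cycleAltMatching k)
    (hind : GInducedMatching (cycleGraph (2 * k)) M') : M'.card ≤ k / 2 := by
  obtain ⟨S, -, rfl⟩ := Finset.subset_image_iff.mp hM'
  rw [gInducedMatching_image_cycleAltEdge_iff] at hind
  have := two_mul_card_le_of_isIndepSet_cycleGraph hk hind
  rw [Finset.card_image_of_injective _ cycleAltEdge_injective]
  omega

theorem exists_gInducedMatching_subset_cycleAltMatching_card_eq :
    ∃ M' ⊆ cycleAltMatching k, GInducedMatching (cycleGraph (2 * k)) M' ∧ M'.card = k / 2 := by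
  obtain ⟨S, hS, hcard⟩ := exists_isIndepSet_cycleGraph_card_eq k
  refine ⟨S.image cycleAltEdge, Finset.image_subset_image S.subset_univ,
    (gInducedMatching_image_cycleAltEdge_iff S).mpr hS, ?_⟩
  rw [Finset.card_image_of_injective _ cycleAltEdge_injective, hcard]

end CycleAltMatching

/-- The cycle `C` of length `2k`, `k` odd, contains a matching `M` of size `k` (every
other edge) whose largest induced submatching has size exactly `(k-1)/2`; consequently,
any graph containing such a cycle has `α_k < 1/2`. -/
theorem stmt13 (k : ℕ) (hodd : Odd k) (hk : 3 ≤ k) :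
    (∃ M : Finset (Fin (2 * k) × Fin (2 * k)),
      GMatching (SimpleGraph.cycleGraph (2 * k)) M ∧ M.card = k ∧
      (∃ M' ⊆ M, GInducedMatching (SimpleGraph.cycleGraph (2 * k)) M' ∧
        M'.card = (k - 1) / 2) ∧
      (∀ M' ⊆ M, GInducedMatching (SimpleGraph.cycleGraph (2 * k)) M' →
        M'.card ≤ (k - 1) / 2)) ∧
    (∀ (V : Type) (G : SimpleGraph V) (f : Fin (2 * k) → V), Function.Injective f →
      (∀ i j, (SimpleGraph.cycleGraph (2 * k)).Adj i j → G.Adj (f i) (f j)) →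
      alphaMT G k < 1 / 2) := by
  have hk1 : k ≠ 1 := by omega
  have hhalf : k / 2 = (k - 1) / 2 := by obtain ⟨m, rfl⟩ := hodd; omega
  have hbound : ∀ M' ⊆ cycleAltMatching k, GInducedMatching (cycleGraph (2 * k)) M' →
      M'.card ≤ k / 2 := fun _ hM' hind =>
    card_le_of_gInducedMatching_subset_cycleAltMatching hk1 hM' hind
  refine ⟨⟨cycleAltMatching k, gMatching_cycleAltMatching, card_cycleAltMatching,
    hhalf ▸ exists_gInducedMatching_subset_cycleAltMatching_card_eq, hhalf ▸ hbound⟩, ?_⟩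
  intro V G f hf hhom
  classical
  let φ : cycleGraph (2 * k) →g G := ⟨f, hhom _ _⟩
  have hφ : Function.Injective φ := hf
  calc alphaMT G k ≤ ((k / 2 : ℕ) : ℝ) / k :=
        alphaMT_le_div (by omega) (gMatching_cycleAltMatching.image hφ)
          (by rw [Finset.card_image_of_injective _ (hφ.prodMap hφ), card_cycleAltMatching])
          fun M' hM' hind => card_le_of_gInducedMatching_subset_image hφ
            gMatching_cycleAltMatching hbound hM' hind
    _ < 1 / 2 := by
      rw [div_lt_div_iff₀ (by positivity) (by norm_num)]
      exact_mod_cast (by omega : k / 2 * 2 < 1 * k)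
end
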